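/- arXiv:1607.02005 — 2 statements merged into one kernel-verified Lean document; each statement's English description precedes it below -/
import Mathlib

section
/- (Entrywise null-space bound from the BP proof.) Let D be a convolutional dictionary with mutual coherence μ = μ(D), and let Δ ∈ ℝ^{mN} satisfy DΔ = 0. Then for every index a = (i,j), |Δ_a| ≤ (μ/(μ+1)) · ‖δ_{p(a)}‖_1, where δ_{p(a)} is the restriction of Δ to the stripe index set S_i centered at the position i of the atom d_a (i.e. the set of all indices of atoms that overlap d_a). -/
open Finset

noncomputable section

attribute [local instance] Classical.propDecidable

/-- The stripe index set `S i`: all column indices `(t, j)` whose shift position `t` lies in the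
cyclic window `{i - n + 1, …, i + n - 1}` (mod `N`). -/
def stripeSet (N n m : ℕ) [NeZero N] (i : ZMod N) : Finset (ZMod N × Fin m) :=
  Finset.univ.filter (fun a =>
    ∃ s ∈ Finset.Icc (-(n : ℤ) + 1) ((n : ℤ) - 1), a.1 = i + (s : ZMod N))

/-- The number of nonzero entries of `Γ` in the `i`-th stripe. -/
def stripeNnz (N n m : ℕ) [NeZero N] (Γ : ZMod N × Fin m → ℝ) (i : ZMod N) : ℕ :=
  ((stripeSet N n m i).filter (fun a => Γ a ≠ 0)).card

/-- The `ℓ_{0,∞}` norm of a global vector: the maximal number of nonzeros in a stripe. -/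
def l0inf (N n m : ℕ) [NeZero N] (Γ : ZMod N × Fin m → ℝ) : ℕ :=
  Finset.univ.sup (fun i : ZMod N => stripeNnz N n m Γ i)

/-- Inner product of two columns of `D`. -/
def colInner {N m : ℕ} [NeZero N] (D : Matrix (ZMod N) (ZMod N × Fin m) ℝ)
    (a b : ZMod N × Fin m) : ℝ :=
  ∑ t, D t a * D t b

/-- The mutual coherence `μ(D)`: the maximal absolute inner product between distinct columns. -/
def mutualCoherence {N m : ℕ} [NeZero N] (D : Matrix (ZMod N) (ZMod N × Fin m) ℝ) : ℝ :=
  sSup {x | ∃ a b : ZMod N × Fin m, a ≠ b ∧ x = |colInner D a b|}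

/-- `D` is a convolutional dictionary: its columns are the cyclic shifts of the columns of a
local dictionary `D_L ∈ ℝ^{n×m}`, and all columns have unit `ℓ2` norm. -/
def IsConvDict (N n m : ℕ) [NeZero N] (D : Matrix (ZMod N) (ZMod N × Fin m) ℝ) : Prop :=
  (∃ DL : Fin n → Fin m → ℝ, ∀ (i t : ZMod N) (j : Fin m),
      D t (i, j) = if h : (t - i).val < n then DL ⟨(t - i).val, h⟩ j else 0) ∧
  ∀ a : ZMod N × Fin m, ∑ t, (D t a) ^ 2 = 1

/-- The shifted mutual coherence `μ_s`: the maximal absolute inner product between a column at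
shift position `i` and a column at shift position `i + s` (distinct columns when `s = 0`). -/
def shiftedMu {N m : ℕ} [NeZero N] (D : Matrix (ZMod N) (ZMod N × Fin m) ℝ) (s : ℤ) : ℝ :=
  sSup {x | ∃ (i : ZMod N) (j l : Fin m), (s = 0 → j ≠ l) ∧
    x = |colInner D (i, j) (i + (s : ZMod N), l)|}

/-- `n_{i,s}(Γ)`: the number of nonzeros of `Γ` in the local chunk at shift `s` of the
`i`-th stripe. -/
def shiftNnz (N m : ℕ) [NeZero N] (Γ : ZMod N × Fin m → ℝ) (i : ZMod N) (s : ℤ) : ℕ :=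
  (Finset.univ.filter (fun j : Fin m => Γ (i + (s : ZMod N), j) ≠ 0)).card

/-- The stripe coherence `ζ_i(Γ) = Σ_s n_{i,s}(Γ) · μ_s`. -/
def stripeCoherence (N n m : ℕ) [NeZero N] (D : Matrix (ZMod N) (ZMod N × Fin m) ℝ)
    (Γ : ZMod N × Fin m → ℝ) (i : ZMod N) : ℝ :=
  ∑ s ∈ Finset.Icc (-(n : ℤ) + 1) ((n : ℤ) - 1), (shiftNnz N m Γ i s : ℝ) * shiftedMu D s

/-- The Stripe-Spark `σ_∞(D)`: the least `ℓ_{0,∞}` norm of a nonzero vector in the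
null space of `D` (`⊤` if the null space is trivial). -/
def stripeSpark (N n m : ℕ) [NeZero N] (D : Matrix (ZMod N) (ZMod N × Fin m) ℝ) : ℕ∞ :=
  sInf {k : ℕ∞ | ∃ Δ : ZMod N × Fin m → ℝ, Δ ≠ 0 ∧ D.mulVec Δ = 0 ∧ (l0inf N n m Δ : ℕ∞) = k}

/-- The `ℓ1` norm of a global vector. -/
def l1norm {N m : ℕ} [NeZero N] (Γ : ZMod N × Fin m → ℝ) : ℝ :=
  ∑ a, |Γ a|

/- Pairing `DΔ = 0` with the column `d_a` gives `Δ_a = -∑_{b ≠ a} ⟨d_a, d_b⟩ Δ_b`, where only the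
atoms overlapping `d_a`, i.e. `b ∈ S_i`, contribute. Bounding each inner product by `μ` yields
`|Δ_a| ≤ μ (‖δ_{p(a)}‖₁ - |Δ_a|)`, which rearranges to the claim. -/

lemma abs_le_div_mul_sum_of_sum_mul_eq_zero {ι : Type*} [Fintype ι] [DecidableEq ι]
    {g x : ι → ℝ} {S : Finset ι} {a : ι} {μ : ℝ} (hμ : 0 ≤ μ) (ha : a ∈ S) (hga : g a = 1)
    (hg : ∀ b ≠ a, |g b| ≤ μ) (hgS : ∀ b ∉ S, g b = 0) (hsum : ∑ b, g b * x b = 0) :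
    |x a| ≤ μ / (μ + 1) * ∑ b ∈ S, |x b| := by
  have hsumS : ∑ b ∈ S, g b * x b = 0 := by
    rw [← hsum]
    exact Finset.sum_subset (Finset.subset_univ S) fun b _ hb => by rw [hgS b hb, zero_mul]
  rw [← Finset.add_sum_erase S _ ha, hga, one_mul] at hsumS
  have hrest : |x a| ≤ μ * ∑ b ∈ S.erase a, |x b| := calc
    |x a| = |∑ b ∈ S.erase a, g b * x b| := by rw [eq_neg_of_add_eq_zero_left hsumS, abs_neg]
    _ ≤ ∑ b ∈ S.erase a, |g b| * |x b| := by
      simpa only [abs_mul] using Finset.abs_sum_le_sum_abs (fun b => g b * x b) (S.erase a)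
    _ ≤ ∑ b ∈ S.erase a, μ * |x b| :=
      Finset.sum_le_sum fun b hb =>
        mul_le_mul_of_nonneg_right (hg b (Finset.ne_of_mem_erase hb)) (abs_nonneg _)
    _ = μ * ∑ b ∈ S.erase a, |x b| := (Finset.mul_sum _ _ _).symm
  rw [← Finset.add_sum_erase S _ ha, div_mul_eq_mul_div, le_div_iff₀ (by linarith)]
  nlinarith

section Dictionary

open Matrix

variable {N n m : ℕ} [NeZero N] {D : Matrix (ZMod N) (ZMod N × Fin m) ℝ}

lemma colInner_eq_mul_apply (a b : ZMod N × Fin m) : colInner D a b = (Dᵀ * D) a b := by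
  simp only [colInner, Matrix.mul_apply, Matrix.transpose_apply]

lemma sum_colInner_mul_eq_zero {Δ : ZMod N × Fin m → ℝ} (hΔ : D *ᵥ Δ = 0)
    (a : ZMod N × Fin m) : ∑ b, colInner D a b * Δ b = 0 := by
  have h : (Dᵀ * D) *ᵥ Δ = 0 := by rw [← Matrix.mulVec_mulVec, hΔ, Matrix.mulVec_zero]
  simpa only [colInner_eq_mul_apply, Matrix.mulVec, dotProduct, Pi.zero_apply] using congrFun h a

lemma colInner_self_of_sum_sq_eq_one {a : ZMod N × Fin m} (ha : ∑ t, D t a ^ 2 = 1) :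
    colInner D a a = 1 := by
  simpa only [colInner, sq] using ha

lemma mutualCoherence_nonneg (D : Matrix (ZMod N) (ZMod N × Fin m) ℝ) :
    0 ≤ mutualCoherence D :=
  Real.sSup_nonneg fun _ ⟨_, _, _, hx⟩ => hx ▸ abs_nonneg _

lemma abs_colInner_le_mutualCoherence {a b : ZMod N × Fin m} (hab : a ≠ b) :
    |colInner D a b| ≤ mutualCoherence D := by
  refine le_csSup ?_ ⟨a, b, hab, rfl⟩
  refine ((Set.finite_range fun p : (ZMod N × Fin m) × (ZMod N × Fin m) =>
    |colInner D p.1 p.2|).subset ?_).bddAbove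
  rintro _ ⟨c, d, -, rfl⟩
  exact ⟨(c, d), rfl⟩

lemma mem_stripeSet_of_val_sub_lt {i t t₀ : ZMod N} (l : Fin m) (hi : (t - i).val < n)
    (ht₀ : (t - t₀).val < n) : (t₀, l) ∈ stripeSet N n m i := by
  simp only [stripeSet, Finset.mem_filter, Finset.mem_univ, true_and, Finset.mem_Icc]
  refine ⟨((t - i).val : ℤ) - ((t - t₀).val : ℤ), ⟨by omega, by omega⟩, ?_⟩
  push_cast
  simp only [ZMod.natCast_val, ZMod.cast_id', id]
  ring

lemma mem_stripeSet_self (hn : 1 ≤ n) (i : ZMod N) (j : Fin m) : (i, j) ∈ stripeSet N n m i := by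
  have h0 : (i - i).val < n := by rw [sub_self, ZMod.val_zero]; omega
  exact mem_stripeSet_of_val_sub_lt j h0 h0

lemma colInner_eq_zero_of_notMem_stripeSet
    (hsupp : ∀ (i t : ZMod N) (j : Fin m), n ≤ (t - i).val → D t (i, j) = 0)
    {i : ZMod N} (j : Fin m) {b : ZMod N × Fin m} (hb : b ∉ stripeSet N n m i) :
    colInner D (i, j) b = 0 := by
  obtain ⟨t₀, l⟩ := b
  refine Finset.sum_eq_zero fun t _ => ?_
  by_cases hi : (t - i).val < n
  · rw [hsupp t₀ t l (not_lt.mp fun ht₀ => hb (mem_stripeSet_of_val_sub_lt l hi ht₀)), mul_zero]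
  · rw [hsupp i t j (not_lt.mp hi), zero_mul]

lemma IsConvDict.apply_eq_zero (hD : IsConvDict N n m D) {i t : ZMod N} (j : Fin m)
    (h : n ≤ (t - i).val) : D t (i, j) = 0 := by
  obtain ⟨⟨DL, hDL⟩, -⟩ := hD
  rw [hDL, dif_neg (not_lt.mpr h)]

end Dictionary

theorem nullspace_entrywise_bound_general (N n m : ℕ) [NeZero N]
    (hn : 1 ≤ n)
    (D : Matrix (ZMod N) (ZMod N × Fin m) ℝ) (hD : IsConvDict N n m D)
    (Δ : ZMod N × Fin m → ℝ) (hΔ : D.mulVec Δ = 0) :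
    ∀ (i : ZMod N) (j : Fin m),
      |Δ (i, j)| ≤ (mutualCoherence D / (mutualCoherence D + 1)) *
        ∑ a ∈ stripeSet N n m i, |Δ a| := fun i j =>
  abs_le_div_mul_sum_of_sum_mul_eq_zero (mutualCoherence_nonneg D) (mem_stripeSet_self hn i j)
    (colInner_self_of_sum_sq_eq_one (hD.2 (i, j)))
    (fun _ hb => abs_colInner_le_mutualCoherence hb.symm)
    (fun _ hb => colInner_eq_zero_of_notMem_stripeSet (fun _ _ => hD.apply_eq_zero) j hb)
    (sum_colInner_mul_eq_zero hΔ (i, j))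

/-- Entrywise null-space bound from the BP proof: if `DΔ = 0`, then every entry
of `Δ` is bounded by `μ/(μ+1)` times the `ℓ1` norm of the stripe of `Δ` centered at that entry. -/
theorem nullspace_entrywise_bound (N n m : ℕ) [NeZero N]
    (hm : 1 ≤ m) (hn : 1 ≤ n) (hN : 2 * n - 1 ≤ N)
    (D : Matrix (ZMod N) (ZMod N × Fin m) ℝ) (hD : IsConvDict N n m D)
    (Δ : ZMod N × Fin m → ℝ) (hΔ : D.mulVec Δ = 0) :
    ∀ (i : ZMod N) (j : Fin m),
      |Δ (i, j)| ≤ (mutualCoherence D / (mutualCoherence D + 1)) *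
        ∑ a ∈ stripeSet N n m i, |Δ a| :=
  nullspace_entrywise_bound_general N n m hn D hD Δ hΔ

end
end

section
/- (OMP atom-selection guarantee under the stripe-coherence bound.) Let D be a convolutional dictionary with shifted mutual coherences μ_s, and let Γ ∈ ℝ^{mN} with support 𝒯 satisfy max_{i∈ℤ/Nℤ} ζ_i(Γ) < (1/2)·(1 + μ_0). Then for every nonzero Γ′ ∈ ℝ^{mN} whose support is contained in 𝒯, if i₀ is any index maximizing |Γ′| over its support, then |⟨d_{i₀}, DΓ′⟩| > |⟨d_j, DΓ′⟩| for every index j ∉ 𝒯. Consequently, Orthogonal Matching Pursuit applied to X = DΓ selects an atom from the true support at every iteration and recovers Γ exactly. -/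
open Finset

noncomputable section

attribute [local instance] Classical.propDecidable

section Aux

variable {N n m : ℕ} [NeZero N]

lemma colInner_self_eq_one {D : Matrix (ZMod N) (ZMod N × Fin m) ℝ}
    (hD : IsConvDict N n m D) (a : ZMod N × Fin m) : colInner D a a = 1 := by
  have h := hD.2 a
  simpa [colInner, pow_two] using h

lemma abs_colInner_le_one {D : Matrix (ZMod N) (ZMod N × Fin m) ℝ}
    (hD : IsConvDict N n m D) (a b : ZMod N × Fin m) : |colInner D a b| ≤ 1 := by
  have h := Finset.sum_mul_sq_le_sq_mul_sq Finset.univ (fun t => D t a) (fun t => D t b)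
  rw [hD.2 a, hD.2 b] at h
  have h1 : (colInner D a b) ^ 2 ≤ 1 := by simpa [colInner] using h
  nlinarith [sq_abs (colInner D a b), abs_nonneg (colInner D a b)]

lemma shiftedMu_nonneg (D : Matrix (ZMod N) (ZMod N × Fin m) ℝ) (s : ℤ) :
    0 ≤ shiftedMu D s :=
  Real.sSup_nonneg (by rintro x ⟨i, j, l, -, rfl⟩; exact abs_nonneg _)

lemma abs_colInner_le_shiftedMu {D : Matrix (ZMod N) (ZMod N × Fin m) ℝ}
    (hD : IsConvDict N n m D) (s : ℤ) (i : ZMod N) (j l : Fin m) (h0 : s = 0 → j ≠ l) :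
    |colInner D (i, j) (i + (s : ZMod N), l)| ≤ shiftedMu D s :=
  le_csSup ⟨1, by rintro x ⟨i', j', l', -, rfl⟩; exact abs_colInner_le_one hD _ _⟩
    ⟨i, j, l, h0, rfl⟩

lemma colInner_eq_zero_far {D : Matrix (ZMod N) (ZMod N × Fin m) ℝ}
    (hD : IsConvDict N n m D) (i i' : ZMod N) (j l : Fin m)
    (h : ¬ ∃ s ∈ Finset.Icc (-(n : ℤ) + 1) ((n : ℤ) - 1), i' = i + (s : ZMod N)) :
    colInner D (i, j) (i', l) = 0 := by
  obtain ⟨DL, hDL⟩ := hD.1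
  apply Finset.sum_eq_zero
  intro t _
  rw [hDL i t j, hDL i' t l]
  by_cases h1 : (t - i).val < n
  · by_cases h2 : (t - i').val < n
    · exfalso
      apply h
      refine ⟨((t - i).val : ℤ) - ((t - i').val : ℤ), ?_, ?_⟩
      · rw [Finset.mem_Icc]; omega
      · have e1 : (((t - i).val : ℕ) : ZMod N) = t - i := ZMod.natCast_rightInverse _
        have e2 : (((t - i').val : ℕ) : ZMod N) = t - i' := ZMod.natCast_rightInverse _
        push_cast
        rw [e1, e2]
        ring
    · rw [dif_neg h2, mul_zero]
  · rw [dif_neg h1, zero_mul]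

lemma intCast_injOn_Icc (hn : 1 ≤ n) (hN : 2 * n - 1 ≤ N) {s s' : ℤ}
    (hs : s ∈ Finset.Icc (-(n : ℤ) + 1) ((n : ℤ) - 1))
    (hs' : s' ∈ Finset.Icc (-(n : ℤ) + 1) ((n : ℤ) - 1))
    (h : (s : ZMod N) = (s' : ZMod N)) : s = s' := by
  rw [Finset.mem_Icc] at hs hs'
  have hd : (N : ℤ) ∣ s - s' := by
    rwa [← ZMod.intCast_zmod_eq_zero_iff_dvd, Int.cast_sub, sub_eq_zero]
  have habs : |s - s'| < (N : ℤ) := by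
    rcases abs_cases (s - s') with ⟨he, -⟩ | ⟨he, -⟩ <;> omega
  have := Int.eq_zero_of_abs_lt_dvd hd habs
  omega

noncomputable def shiftOf (N n : ℕ) [NeZero N] (i t : ZMod N) : ℤ :=
  if h : ∃ s ∈ Finset.Icc (-(n : ℤ) + 1) ((n : ℤ) - 1), t = i + (s : ZMod N) then h.choose
  else 0

lemma shiftOf_spec {i t : ZMod N}
    (h : ∃ s ∈ Finset.Icc (-(n : ℤ) + 1) ((n : ℤ) - 1), t = i + (s : ZMod N)) :
    shiftOf N n i t ∈ Finset.Icc (-(n : ℤ) + 1) ((n : ℤ) - 1) ∧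
      t = i + ((shiftOf N n i t : ℤ) : ZMod N) := by
  rw [shiftOf, dif_pos h]
  exact ⟨h.choose_spec.1, h.choose_spec.2⟩

lemma stripeCoherence_eq (D : Matrix (ZMod N) (ZMod N × Fin m) ℝ)
    (Γ : ZMod N × Fin m → ℝ) (i : ZMod N) :
    stripeCoherence N n m D Γ i =
      ∑ p ∈ (Finset.Icc (-(n : ℤ) + 1) ((n : ℤ) - 1) ×ˢ (Finset.univ : Finset (Fin m))).filter
        (fun p => Γ (i + (p.1 : ZMod N), p.2) ≠ 0), shiftedMu D p.1 := by
  rw [Finset.sum_filter, Finset.sum_product]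
  unfold stripeCoherence shiftNnz
  refine Finset.sum_congr rfl fun s _ => ?_
  simp only [← Finset.sum_filter]
  rw [Finset.sum_const, nsmul_eq_mul]

lemma sum_shiftedMu_le {D : Matrix (ZMod N) (ZMod N × Fin m) ℝ}
    (Γ : ZMod N × Fin m → ℝ) (i : ZMod N) (S : Finset (ZMod N × Fin m))
    (σ : ZMod N × Fin m → ℤ)
    (hσ : ∀ a ∈ S, σ a ∈ Finset.Icc (-(n : ℤ) + 1) ((n : ℤ) - 1) ∧ a.1 = i + (σ a : ZMod N))
    (hΓ : ∀ a ∈ S, Γ a ≠ 0) :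
    ∑ a ∈ S, shiftedMu D (σ a) ≤ stripeCoherence N n m D Γ i := by
  rw [stripeCoherence_eq]
  have hinj : ∀ a ∈ S, ∀ b ∈ S,
      (fun a : ZMod N × Fin m => (σ a, a.2)) a = (fun a : ZMod N × Fin m => (σ a, a.2)) b →
      a = b := by
    intro a ha b hb hab
    have h1 : σ a = σ b := (Prod.ext_iff.1 hab).1
    have h2 : a.2 = b.2 := (Prod.ext_iff.1 hab).2
    exact Prod.ext (by rw [(hσ a ha).2, (hσ b hb).2, h1]) h2
  have key : ∑ a ∈ S, shiftedMu D (σ a)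
      = ∑ p ∈ S.image (fun a : ZMod N × Fin m => (σ a, a.2)), shiftedMu D p.1 :=
    (Finset.sum_image (f := fun p : ℤ × Fin m => shiftedMu D p.1) hinj).symm
  rw [key]
  apply Finset.sum_le_sum_of_subset_of_nonneg
  · intro p hp
    simp only [Finset.mem_image] at hp
    obtain ⟨a, ha, rfl⟩ := hp
    simp only [Finset.mem_filter, Finset.mem_product, Finset.mem_univ, and_true]
    refine ⟨(hσ a ha).1, ?_⟩
    have hane := hΓ a ha
    have hpe : (i + ((σ a : ℤ) : ZMod N), a.2) = a := Prod.ext ((hσ a ha).2).symm rfl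
    rwa [hpe]
  · intro p _ _; exact shiftedMu_nonneg D p.1

end Aux

/-- OMP atom-selection guarantee under the stripe-coherence bound: if
`max_i ζ_i(Γ) < (1/2)(1 + μ_0)`, then for every nonzero `Γ'` supported within the support of `Γ`
(such as the representation of any OMP residual), the column of `D` with the largest absolute
inner product with `D Γ'` lies inside the true support; hence OMP selects a correct atom at
every iteration and recovers `Γ` exactly. -/
theorem omp_recovery_stripeCoherence (N n m : ℕ) [NeZero N]
    (hm : 1 ≤ m) (hn : 1 ≤ n) (hN : 2 * n - 1 ≤ N)
    (D : Matrix (ZMod N) (ZMod N × Fin m) ℝ) (hD : IsConvDict N n m D)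
    (Γ : ZMod N × Fin m → ℝ)
    (hΓ : Finset.univ.sup' ⟨(0 : ZMod N), Finset.mem_univ 0⟩ (stripeCoherence N n m D Γ) <
      (1 / 2) * (1 + shiftedMu D 0)) :
    ∀ Γ' : ZMod N × Fin m → ℝ, Γ' ≠ 0 →
      Function.support Γ' ⊆ Function.support Γ →
      ∀ i₀ ∈ Function.support Γ', (∀ a ∈ Function.support Γ', |Γ' a| ≤ |Γ' i₀|) →
      ∀ j ∉ Function.support Γ,
        |∑ t, D t j * D.mulVec Γ' t| < |∑ t, D t i₀ * D.mulVec Γ' t| := by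
  intro Γ' hΓ'ne hsupp i₀ hi₀ hmax j hj
  classical
  set Z := Finset.univ.sup' ⟨(0 : ZMod N), Finset.mem_univ 0⟩ (stripeCoherence N n m D Γ)
    with hZdef
  set T' : Finset (ZMod N × Fin m) := Finset.univ.filter (fun a => Γ' a ≠ 0) with hT'
  have hmemT' : ∀ a, a ∈ T' ↔ Γ' a ≠ 0 := by intro a; simp [hT']
  have hi₀T' : i₀ ∈ T' := (hmemT' i₀).2 hi₀
  have hc : 0 < |Γ' i₀| := abs_pos.mpr hi₀
  set c := |Γ' i₀| with hcdef
  have hstr : ∀ (i : ZMod N) (a : ZMod N × Fin m),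
      a ∈ stripeSet N n m i ↔
        ∃ s ∈ Finset.Icc (-(n : ℤ) + 1) ((n : ℤ) - 1), a.1 = i + (s : ZMod N) := by
    intro i a; simp [stripeSet]
  have h0Icc : (0 : ℤ) ∈ Finset.Icc (-(n : ℤ) + 1) ((n : ℤ) - 1) := by
    rw [Finset.mem_Icc]; omega
  -- expansion of the correlations
  have hexp : ∀ b : ZMod N × Fin m,
      (∑ t, D t b * D.mulVec Γ' t) = ∑ a ∈ T', Γ' a * colInner D b a := by
    intro b
    have h1 : (∑ t, D t b * D.mulVec Γ' t) = ∑ a, Γ' a * colInner D b a := by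
      unfold Matrix.mulVec dotProduct colInner
      simp only [Finset.mul_sum]
      rw [Finset.sum_comm]
      refine Finset.sum_congr rfl fun a _ => Finset.sum_congr rfl fun t _ => by ring
    rw [h1]
    symm
    apply Finset.sum_subset (Finset.subset_univ _)
    intro a _ ha
    have : Γ' a = 0 := by
      by_contra hne; exact ha ((hmemT' a).2 hne)
    rw [this, zero_mul]
  -- the generic stripe bound
  have hbnd : ∀ (b : ZMod N × Fin m) (S : Finset (ZMod N × Fin m)), S ⊆ T' →
      (∀ a ∈ S, a ≠ b) →
      |∑ a ∈ S, Γ' a * colInner D b a| ≤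
        c * ∑ a ∈ S.filter (fun a => a ∈ stripeSet N n m b.1),
          shiftedMu D (shiftOf N n b.1 a.1) := by
    intro b S hST hSb
    calc |∑ a ∈ S, Γ' a * colInner D b a| ≤ ∑ a ∈ S, |Γ' a * colInner D b a| :=
          Finset.abs_sum_le_sum_abs _ _
      _ = ∑ a ∈ S.filter (fun a => a ∈ stripeSet N n m b.1), |Γ' a * colInner D b a| := by
          symm
          apply Finset.sum_subset (Finset.filter_subset _ _)
          intro a ha hna
          have hz : colInner D b a = 0 := by
            apply colInner_eq_zero_far hD
            intro hex
            exact hna (Finset.mem_filter.2 ⟨ha, (hstr b.1 a).2 hex⟩)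
          rw [hz, mul_zero, abs_zero]
      _ ≤ ∑ a ∈ S.filter (fun a => a ∈ stripeSet N n m b.1),
            c * shiftedMu D (shiftOf N n b.1 a.1) := by
          apply Finset.sum_le_sum
          intro a ha
          obtain ⟨haS, hastr⟩ := Finset.mem_filter.1 ha
          have hΓ'a : Γ' a ≠ 0 := (hmemT' a).1 (hST haS)
          have h1 : |Γ' a| ≤ c := hmax a hΓ'a
          obtain ⟨hsIcc, hrep⟩ := shiftOf_spec ((hstr b.1 a).1 hastr)
          have h0 : shiftOf N n b.1 a.1 = 0 → b.2 ≠ a.2 := by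
            intro hs0 heq
            have ha1 : a.1 = b.1 := by rw [hrep, hs0]; simp
            exact hSb a haS (Prod.ext ha1 heq.symm)
          have h2 := abs_colInner_le_shiftedMu hD (shiftOf N n b.1 a.1) b.1 b.2 a.2 h0
          have ha_eq : (b.1 + ((shiftOf N n b.1 a.1 : ℤ) : ZMod N), a.2) = a :=
            Prod.ext hrep.symm rfl
          rw [ha_eq] at h2
          rw [abs_mul]
          exact mul_le_mul h1 h2 (abs_nonneg _) (le_of_lt hc)
      _ = c * ∑ a ∈ S.filter (fun a => a ∈ stripeSet N n m b.1),
            shiftedMu D (shiftOf N n b.1 a.1) := (Finset.mul_sum _ _ _).symm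
  -- the counting bound
  have hΓne : ∀ a ∈ T', Γ a ≠ 0 := by
    intro a ha
    exact hsupp ((hmemT' a).1 ha)
  have hcount : ∀ (b : ZMod N × Fin m) (S : Finset (ZMod N × Fin m)), S ⊆ T' →
      ∑ a ∈ S.filter (fun a => a ∈ stripeSet N n m b.1), shiftedMu D (shiftOf N n b.1 a.1) ≤
        stripeCoherence N n m D Γ b.1 := by
    intro b S hST
    apply sum_shiftedMu_le Γ b.1 _ (fun a => shiftOf N n b.1 a.1)
    · intro a ha
      exact shiftOf_spec ((hstr b.1 a).1 (Finset.mem_filter.1 ha).2)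
    · intro a ha
      exact hΓne a (hST (Finset.mem_filter.1 ha).1)
  -- upper bound for j
  have hjT' : ∀ a ∈ T', a ≠ j := by
    intro a ha heq
    apply hj
    rw [← heq]
    exact hsupp ((hmemT' a).1 ha)
  have hZj : stripeCoherence N n m D Γ j.1 ≤ Z :=
    Finset.le_sup' (stripeCoherence N n m D Γ) (Finset.mem_univ j.1)
  have hupper : |∑ t, D t j * D.mulVec Γ' t| ≤ c * Z := by
    rw [hexp j]
    calc |∑ a ∈ T', Γ' a * colInner D j a| ≤
        c * ∑ a ∈ T'.filter (fun a => a ∈ stripeSet N n m j.1),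
          shiftedMu D (shiftOf N n j.1 a.1) := hbnd j T' (le_refl T') hjT'
      _ ≤ c * stripeCoherence N n m D Γ j.1 :=
          mul_le_mul_of_nonneg_left (hcount j T' (le_refl T')) (le_of_lt hc)
      _ ≤ c * Z := mul_le_mul_of_nonneg_left hZj (le_of_lt hc)
  -- the shift of i₀ relative to itself is 0
  have hσ0 : shiftOf N n i₀.1 i₀.1 = 0 := by
    have hex : ∃ s ∈ Finset.Icc (-(n : ℤ) + 1) ((n : ℤ) - 1),
        i₀.1 = i₀.1 + (s : ZMod N) := ⟨0, h0Icc, by simp⟩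
    obtain ⟨h1, h2⟩ := shiftOf_spec hex
    apply intCast_injOn_Icc hn hN h1 h0Icc
    have h3 : ((shiftOf N n i₀.1 i₀.1 : ℤ) : ZMod N) = 0 := by
      have := h2.symm
      rwa [add_eq_left] at this
    rw [h3, Int.cast_zero]
  -- refined counting bound at i₀
  have hZi : stripeCoherence N n m D Γ i₀.1 ≤ Z :=
    Finset.le_sup' (stripeCoherence N n m D Γ) (Finset.mem_univ i₀.1)
  have hrefine :
      ∑ a ∈ (T'.erase i₀).filter (fun a => a ∈ stripeSet N n m i₀.1),
        shiftedMu D (shiftOf N n i₀.1 a.1) ≤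
        stripeCoherence N n m D Γ i₀.1 - shiftedMu D 0 := by
    set F := (T'.erase i₀).filter (fun a => a ∈ stripeSet N n m i₀.1) with hF
    have hi₀F : i₀ ∉ F := fun h => (Finset.mem_erase.1 (Finset.mem_filter.1 h).1).1 rfl
    have hins : ∑ a ∈ insert i₀ F, shiftedMu D (shiftOf N n i₀.1 a.1) ≤
        stripeCoherence N n m D Γ i₀.1 := by
      apply sum_shiftedMu_le Γ i₀.1 _ (fun a => shiftOf N n i₀.1 a.1)
      · intro a ha
        rcases Finset.mem_insert.1 ha with rfl | haF
        · exact ⟨by rw [hσ0]; exact h0Icc, by rw [hσ0]; simp⟩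
        · exact shiftOf_spec ((hstr i₀.1 a).1 (Finset.mem_filter.1 haF).2)
      · intro a ha
        rcases Finset.mem_insert.1 ha with rfl | haF
        · exact hsupp hi₀
        · exact hΓne a (Finset.mem_erase.1 (Finset.mem_filter.1 haF).1).2
    rw [Finset.sum_insert hi₀F, hσ0] at hins
    linarith
  -- lower bound for i₀
  have hiT'sub : T'.erase i₀ ⊆ T' := Finset.erase_subset _ _
  have hine : ∀ a ∈ T'.erase i₀, a ≠ i₀ := fun a ha => (Finset.mem_erase.1 ha).1
  have htail : |∑ a ∈ T'.erase i₀, Γ' a * colInner D i₀ a| ≤ c * (Z - shiftedMu D 0) := by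
    calc |∑ a ∈ T'.erase i₀, Γ' a * colInner D i₀ a| ≤
        c * ∑ a ∈ (T'.erase i₀).filter (fun a => a ∈ stripeSet N n m i₀.1),
          shiftedMu D (shiftOf N n i₀.1 a.1) := hbnd i₀ _ hiT'sub hine
      _ ≤ c * (stripeCoherence N n m D Γ i₀.1 - shiftedMu D 0) :=
          mul_le_mul_of_nonneg_left hrefine (le_of_lt hc)
      _ ≤ c * (Z - shiftedMu D 0) := by
          apply mul_le_mul_of_nonneg_left _ (le_of_lt hc)
          linarith
  have hsplit : ∑ a ∈ T', Γ' a * colInner D i₀ a =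
      Γ' i₀ + ∑ a ∈ T'.erase i₀, Γ' a * colInner D i₀ a := by
    rw [← Finset.add_sum_erase _ _ hi₀T', colInner_self_eq_one hD, mul_one]
  have hlower : c * (1 - (Z - shiftedMu D 0)) ≤ |∑ t, D t i₀ * D.mulVec Γ' t| := by
    rw [hexp i₀, hsplit]
    have habs : |Γ' i₀| - |∑ a ∈ T'.erase i₀, Γ' a * colInner D i₀ a| ≤
        |Γ' i₀ + ∑ a ∈ T'.erase i₀, Γ' a * colInner D i₀ a| := by
      have h := abs_sub_abs_le_abs_sub (Γ' i₀) (-(∑ a ∈ T'.erase i₀, Γ' a * colInner D i₀ a))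
      rwa [abs_neg, sub_neg_eq_add] at h
    have : c * (1 - (Z - shiftedMu D 0)) ≤
        |Γ' i₀| - |∑ a ∈ T'.erase i₀, Γ' a * colInner D i₀ a| := by
      rw [← hcdef]; nlinarith [htail]
    linarith
  -- conclusion
  have hstrict : c * Z < c * (1 - (Z - shiftedMu D 0)) := by
    apply mul_lt_mul_of_pos_left _ hc
    linarith
  calc |∑ t, D t j * D.mulVec Γ' t| ≤ c * Z := hupper
    _ < c * (1 - (Z - shiftedMu D 0)) := hstrict
    _ ≤ |∑ t, D t i₀ * D.mulVec Γ' t| := hlower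

end
end
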